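/- arXiv:1905.10002 — 2 statements merged into one kernel-verified Lean document; each statement's English description precedes it below -/
import Mathlib

section
/- Let H be a real Hilbert space with inner product ⟨·,·⟩, let A be a continuous coercive symmetric bilinear form on H (A(v,v) ≥ α‖v‖² with α > 0), let τ > 0, K ∈ ℕ, and let (f^k)_{k=1}^K ⊆ H' with dual pairing bounded by ⟨f, v⟩ ≤ ‖f‖_* · A(v,v)^{1/2}. Suppose U⁰ ∈ H and for k = 0, ..., K-1, U^{k+1} ∈ H satisfies τ^{-1}⟨U^{k+1} - U^k, W⟩ + A(U^{k+1}, W) = ⟨f^{k+1}, W⟩ for all W ∈ H. Then max_{0≤k≤K} ‖U^k‖² + ∑_{k=1}^K τ A(U^k, U^k) ≤ C (‖U⁰‖² + ∑_{k=1}^K τ ‖f^k‖_*²) for a constant C independent of τ, K, U⁰, and the f^k. -/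
/-!
Testing the scheme with `W = U^{k+1}` and using `2⟪a - b, a⟫ = ‖a‖² - ‖b‖² + ‖a - b‖²` together
with Young's inequality `c √s ≤ (c² + s) / 2` gives the one-step energy inequality
`‖U^{k+1}‖² + τ A(U^{k+1}, U^{k+1}) ≤ ‖U^k‖² + τ ‖f^{k+1}‖_*²`. Telescoping it yields both
bounds with `C = 1`.
-/

open Finset

lemma sq_norm_sub_sq_norm_le_two_mul_inner {E : Type*} [SeminormedAddCommGroup E]
    [InnerProductSpace ℝ E] (a b : E) :
    ‖a‖ ^ 2 - ‖b‖ ^ 2 ≤ 2 * inner ℝ (a - b) a := by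
  have h := norm_sub_sq_real a b
  rw [inner_sub_left, real_inner_self_eq_norm_sq, real_inner_comm]
  nlinarith [sq_nonneg ‖a - b‖]

lemma mul_sqrt_le_half_add (c s : ℝ) (hs : 0 ≤ s) : c * √s ≤ (c ^ 2 + s) / 2 := by
  have h := two_mul_le_add_sq c √s
  rw [Real.sq_sqrt hs] at h
  linarith

/-- One step of the backward Euler scheme, with `s = A(a, a)` and `y = ⟨f, a⟩`. -/
lemma backwardEuler_energy_step {E : Type*} [SeminormedAddCommGroup E] [InnerProductSpace ℝ E]
    {a b : E} {τ s c y : ℝ} (hτ : 0 < τ) (hs : 0 ≤ s)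
    (heq : τ⁻¹ * inner ℝ (a - b) a + s = y) (hy : y ≤ c * √s) :
    ‖a‖ ^ 2 + τ * s ≤ ‖b‖ ^ 2 + τ * c ^ 2 := by
  have hinner : inner ℝ (a - b) a = τ * (y - s) := by
    rw [← heq]; field_simp; ring
  have hdiff : y - s ≤ (c ^ 2 - s) / 2 := by
    linarith [mul_sqrt_le_half_add c s hs]
  have := sq_norm_sub_sq_norm_le_two_mul_inner a b
  nlinarith [mul_le_mul_of_nonneg_left hdiff hτ.le]

lemma add_sum_le_of_forall_succ_add_le {e d g : ℕ → ℝ} {m : ℕ}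
    (h : ∀ k < m, e (k + 1) + d k ≤ e k + g k) :
    e m + ∑ k ∈ range m, d k ≤ e 0 + ∑ k ∈ range m, g k := by
  have hsum : ∑ k ∈ range m, (e (k + 1) - e k + d k) ≤ ∑ k ∈ range m, g k :=
    sum_le_sum fun k hk => by linarith [h k (mem_range.1 hk)]
  rw [sum_add_distrib, sum_range_sub] at hsum
  linarith

theorem stmt_12_general {H : Type*} [NormedAddCommGroup H] [InnerProductSpace ℝ H]
    (A : H →ₗ[ℝ] H →ₗ[ℝ] ℝ) (α : ℝ) (hα : 0 < α)
    (hcoer : ∀ v : H, α * ‖v‖ ^ 2 ≤ A v v) :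
    ∃ C : ℝ, 0 < C ∧
      ∀ (τ : ℝ), 0 < τ → ∀ (K : ℕ) (U : ℕ → H) (f : ℕ → H →L[ℝ] ℝ) (nf : ℕ → ℝ),
        (∀ k, 0 ≤ nf k) →
        (∀ (k : ℕ) (v : H), f k v ≤ nf k * Real.sqrt (A v v)) →
        (∀ k < K, ∀ W : H,
          τ⁻¹ * (inner ℝ (U (k + 1) - U k) W : ℝ) + A (U (k + 1)) W = f (k + 1) W) →
        (∀ k ≤ K, ‖U k‖ ^ 2 ≤
            C * (‖U 0‖ ^ 2 + ∑ j ∈ Finset.range K, τ * nf (j + 1) ^ 2)) ∧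
        ∑ k ∈ Finset.range K, τ * A (U (k + 1)) (U (k + 1)) ≤
            C * (‖U 0‖ ^ 2 + ∑ j ∈ Finset.range K, τ * nf (j + 1) ^ 2) := by
  refine ⟨1, one_pos, fun τ hτ K U f nf _ hf hU => ?_⟩
  have hA : ∀ v, 0 ≤ A v v := fun v => (by positivity : 0 ≤ α * ‖v‖ ^ 2).trans (hcoer v)
  have energy : ∀ m ≤ K, ‖U m‖ ^ 2 + ∑ k ∈ range m, τ * A (U (k + 1)) (U (k + 1)) ≤
      ‖U 0‖ ^ 2 + ∑ k ∈ range m, τ * nf (k + 1) ^ 2 := fun m hm =>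
    add_sum_le_of_forall_succ_add_le (e := fun k => ‖U k‖ ^ 2) (m := m) fun k hk =>
      backwardEuler_energy_step hτ (hA _) (hU k (by omega) _) (hf _ _)
  have hAsum : ∀ m, 0 ≤ ∑ k ∈ range m, τ * A (U (k + 1)) (U (k + 1)) := fun m =>
    sum_nonneg fun k _ => mul_nonneg hτ.le (hA _)
  rw [one_mul]
  refine ⟨fun m hm => ?_, by linarith [energy K le_rfl, sq_nonneg ‖U K‖]⟩
  have hmono : ∑ k ∈ range m, τ * nf (k + 1) ^ 2 ≤ ∑ k ∈ range K, τ * nf (k + 1) ^ 2 :=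
    sum_le_sum_of_subset_of_nonneg (range_subset_range.2 hm) fun _ _ _ => by positivity
  linarith [energy m hm, hAsum m]

theorem stmt_12 {H : Type*} [NormedAddCommGroup H] [InnerProductSpace ℝ H]
    (A : H →ₗ[ℝ] H →ₗ[ℝ] ℝ) (α : ℝ) (hα : 0 < α)
    (hcont : Continuous fun p : H × H => A p.1 p.2)
    (hsymm : ∀ v w : H, A v w = A w v)
    (hcoer : ∀ v : H, α * ‖v‖ ^ 2 ≤ A v v) :
    ∃ C : ℝ, 0 < C ∧
      ∀ (τ : ℝ), 0 < τ → ∀ (K : ℕ) (U : ℕ → H) (f : ℕ → H →L[ℝ] ℝ) (nf : ℕ → ℝ),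
        (∀ k, 0 ≤ nf k) →
        (∀ (k : ℕ) (v : H), f k v ≤ nf k * Real.sqrt (A v v)) →
        (∀ k < K, ∀ W : H,
          τ⁻¹ * (inner ℝ (U (k + 1) - U k) W : ℝ) + A (U (k + 1)) W = f (k + 1) W) →
        (∀ k ≤ K, ‖U k‖ ^ 2 ≤
            C * (‖U 0‖ ^ 2 + ∑ j ∈ Finset.range K, τ * nf (j + 1) ^ 2)) ∧
        ∑ k ∈ Finset.range K, τ * A (U (k + 1)) (U (k + 1)) ≤
            C * (‖U 0‖ ^ 2 + ∑ j ∈ Finset.range K, τ * nf (j + 1) ^ 2) :=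
  stmt_12_general A α hα hcoer
end

section
/- Let H be a real Hilbert space, A a continuous symmetric nonnegative bilinear form on a dense subspace V ⊆ H, τ > 0, K ∈ ℕ, and (f^k)_{k=1}^K ⊆ H. Suppose U⁰ ∈ V and for k = 0, ..., K-1, U^{k+1} ∈ V satisfies τ^{-1}⟨U^{k+1} - U^k, φ⟩_H + A(U^{k+1}, φ) = ⟨f^{k+1}, φ⟩_H for all φ ∈ V. Then ∑_{k=0}^{K-1} τ ‖τ^{-1}(U^{k+1} - U^k)‖_H² + max_{0≤k≤K} A(U^k, U^k) ≤ C (A(U⁰, U⁰) + ∑_{k=1}^K τ ‖f^k‖_H²) with C independent of τ, K and the data. -/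
/-!
Testing the scheme with the increment `Δ = U^{k+1} - U^k` and using
`2 A(u, u - v) = A(u,u) - A(v,v) + A(u - v, u - v) ≥ A(u,u) - A(v,v)` together with Young's
inequality `τ ⟪f, Δ⟫ ≤ (τ² ‖f‖² + ‖Δ‖²) / 2` gives the one-step energy inequality
`τ ‖τ⁻¹ Δ‖² + A(U^{k+1}, U^{k+1}) ≤ A(U^k, U^k) + τ ‖f^{k+1}‖²`.
Summing it telescopes, and bounds both the dissipated sum and every `A(U^n, U^n)` by
`A(U⁰, U⁰) + ∑ τ ‖f^k‖²`, so `C = 2` works.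
-/

open Finset

section BilinearEnergy

variable {M : Type*} [AddCommGroup M] [Module ℝ M] (A : M →ₗ[ℝ] M →ₗ[ℝ] ℝ)

theorem two_mul_apply_sub_eq (hsymm : ∀ v w, A v w = A w v) (u v : M) :
    2 * A u (u - v) = A u u - A v v + A (u - v) (u - v) := by
  simp only [map_sub, LinearMap.sub_apply]
  rw [hsymm v u]
  ring

theorem apply_self_sub_apply_self_le (hsymm : ∀ v w, A v w = A w v)
    (hnonneg : ∀ v, 0 ≤ A v v) (u v : M) :
    A u u - A v v ≤ 2 * A u (u - v) := by
  rw [two_mul_apply_sub_eq A hsymm]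
  linarith [hnonneg (u - v)]

end BilinearEnergy

theorem backwardEuler_energy_step_s13 {H : Type*} [NormedAddCommGroup H] [InnerProductSpace ℝ H]
    {V : Submodule ℝ H} (A : V →ₗ[ℝ] V →ₗ[ℝ] ℝ) (hsymm : ∀ v w : V, A v w = A w v)
    (hnonneg : ∀ v : V, 0 ≤ A v v) {τ : ℝ} (hτ : 0 < τ) {u v : V} {f : H}
    (hscheme : ∀ φ : V, τ⁻¹ * inner ℝ ((u : H) - v) (φ : H) + A u φ = inner ℝ f (φ : H)) :
    τ * ‖τ⁻¹ • ((u : H) - v)‖ ^ 2 + A u u ≤ A v v + τ * ‖f‖ ^ 2 := by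
  set Δ : H := (u : H) - v
  have htest : τ⁻¹ * ‖Δ‖ ^ 2 + A u (u - v) = inner ℝ f Δ := by
    rw [← real_inner_self_eq_norm_sq]
    exact hscheme (u - v)
  have henergy := apply_self_sub_apply_self_le A hsymm hnonneg u v
  have hyoung : τ * inner ℝ f Δ ≤ (τ ^ 2 * ‖f‖ ^ 2 + ‖Δ‖ ^ 2) / 2 := by
    have := two_mul_le_add_sq (τ * ‖f‖) ‖Δ‖
    nlinarith [real_inner_le_norm f Δ]
  have hlhs : τ * ‖τ⁻¹ • Δ‖ ^ 2 = τ⁻¹ * ‖Δ‖ ^ 2 := by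
    rw [norm_smul, Real.norm_of_nonneg (inv_nonneg.mpr hτ.le)]
    field_simp
  rw [hlhs, ← mul_le_mul_iff_of_pos_left hτ]
  have hτinv : τ * τ⁻¹ = 1 := mul_inv_cancel₀ hτ.ne'
  have htestτ : ‖Δ‖ ^ 2 + τ * A u (u - v) = τ * inner ℝ f Δ := by
    rw [← htest, mul_add, ← mul_assoc, hτinv, one_mul]
  calc τ * (τ⁻¹ * ‖Δ‖ ^ 2 + A u u)
      = ‖Δ‖ ^ 2 + τ * A u u := by rw [mul_add, ← mul_assoc, hτinv, one_mul]
    _ ≤ τ * (A v v + τ * ‖f‖ ^ 2) := by nlinarith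

section Telescoping

variable {K : ℕ} {a g b : ℕ → ℝ}

theorem sum_add_le_of_step (hstep : ∀ k < K, g k + a (k + 1) ≤ a k + b k) :
    ∀ n ≤ K, ∑ k ∈ range n, g k + a n ≤ a 0 + ∑ k ∈ range n, b k := by
  intro n hn
  induction n with
  | zero => simp
  | succ m ih =>
    rw [sum_range_succ, sum_range_succ]
    linarith [ih (by omega), hstep m (by omega)]

theorem sum_add_iSup_le_of_step (ha : ∀ k, 0 ≤ a k) (hg : ∀ k, 0 ≤ g k) (hb : ∀ k, 0 ≤ b k)
    (hstep : ∀ k < K, g k + a (k + 1) ≤ a k + b k) :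
    ∑ k ∈ range K, g k + ⨆ k ∈ Iic K, a k ≤ 2 * (a 0 + ∑ k ∈ range K, b k) := by
  have hpartial := sum_add_le_of_step hstep
  have hbound_nonneg : 0 ≤ a 0 + ∑ k ∈ range K, b k :=
    add_nonneg (ha 0) (sum_nonneg fun k _ => hb k)
  have hsum : ∑ k ∈ range K, g k ≤ a 0 + ∑ k ∈ range K, b k := by
    linarith [hpartial K le_rfl, ha K]
  have hsup : ⨆ k ∈ Iic K, a k ≤ a 0 + ∑ k ∈ range K, b k := by
    refine Real.iSup_le (fun n => Real.iSup_le (fun hn => ?_) hbound_nonneg) hbound_nonneg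
    have hn : n ≤ K := mem_Iic.mp hn
    have hb_mono : ∑ k ∈ range n, b k ≤ ∑ k ∈ range K, b k :=
      sum_le_sum_of_subset_of_nonneg (range_subset_range.mpr hn) fun k _ _ => hb k
    linarith [hpartial n hn, sum_nonneg fun k (_ : k ∈ range n) => hg k]
  linarith

end Telescoping

theorem stmt_13_general {H : Type*} [NormedAddCommGroup H] [InnerProductSpace ℝ H]
    (V : Submodule ℝ H)
    (A : V →ₗ[ℝ] V →ₗ[ℝ] ℝ)
    (hsymm : ∀ v w : V, A v w = A w v)
    (hnonneg : ∀ v : V, 0 ≤ A v v) :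
    ∃ C : ℝ, 0 < C ∧
      ∀ (τ : ℝ), 0 < τ → ∀ (K : ℕ) (U : ℕ → V) (f : ℕ → H),
        (∀ k < K, ∀ φ : V,
          τ⁻¹ * (inner ℝ ((U (k + 1) : H) - (U k : H)) (φ : H) : ℝ) + A (U (k + 1)) φ =
            (inner ℝ (f (k + 1)) (φ : H) : ℝ)) →
        ∑ k ∈ Finset.range K, τ * ‖τ⁻¹ • ((U (k + 1) : H) - (U k : H))‖ ^ 2 +
          (⨆ k ∈ Finset.Iic K, A (U k) (U k)) ≤
          C * (A (U 0) (U 0) + ∑ j ∈ Finset.range K, τ * ‖f (j + 1)‖ ^ 2) := by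
  refine ⟨2, two_pos, fun τ hτ K U f hscheme => ?_⟩
  exact sum_add_iSup_le_of_step (fun k => hnonneg (U k))
    (fun k => mul_nonneg hτ.le (sq_nonneg _)) (fun k => mul_nonneg hτ.le (sq_nonneg _))
    fun k hk => backwardEuler_energy_step_s13 A hsymm hnonneg hτ (hscheme k hk)

theorem stmt_13 {H : Type*} [NormedAddCommGroup H] [InnerProductSpace ℝ H]
    (V : Submodule ℝ H) (hdense : Dense (V : Set H))
    (A : V →ₗ[ℝ] V →ₗ[ℝ] ℝ)
    (hcont : Continuous fun p : V × V => A p.1 p.2)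
    (hsymm : ∀ v w : V, A v w = A w v)
    (hnonneg : ∀ v : V, 0 ≤ A v v) :
    ∃ C : ℝ, 0 < C ∧
      ∀ (τ : ℝ), 0 < τ → ∀ (K : ℕ) (U : ℕ → V) (f : ℕ → H),
        (∀ k < K, ∀ φ : V,
          τ⁻¹ * (inner ℝ ((U (k + 1) : H) - (U k : H)) (φ : H) : ℝ) + A (U (k + 1)) φ =
            (inner ℝ (f (k + 1)) (φ : H) : ℝ)) →
        ∑ k ∈ Finset.range K, τ * ‖τ⁻¹ • ((U (k + 1) : H) - (U k : H))‖ ^ 2 +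
          (⨆ k ∈ Finset.Iic K, A (U k) (U k)) ≤
          C * (A (U 0) (U 0) + ∑ j ∈ Finset.range K, τ * ‖f (j + 1)‖ ^ 2) :=
  stmt_13_general V A hsymm hnonneg
end
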